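/- arXiv:2502.16478 — 2 statements merged into one kernel-verified Lean document; each statement's English description precedes it below -/
import Mathlib

section
/- Let A be any fixed N×M complex matrix. Then the function T ↦ log det(I_N + A T A^H), restricted to positive semidefinite Hermitian T, is concave: for any PSD Hermitian matrices T₁, T₂ and λ ∈ [0,1], log det(I + A(λT₁+(1−λ)T₂)A^H) ≥ λ log det(I + A T₁ A^H) + (1−λ) log det(I + A T₂ A^H). -/
open Matrix ComplexOrder

private lemma real_smul_mat {m n : Type*} (r : ℝ) (M : Matrix m n ℂ) :
    r • M = (r : ℂ) • M := by
  ext i j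
  simp [Complex.real_smul]

private lemma det_re_of_posDef {n : ℕ} {X : Matrix (Fin n) (Fin n) ℂ} (hX : X.PosDef) :
    0 < X.det.re ∧ X.det = (X.det.re : ℂ) := by
  have h := hX.det_pos
  rw [Complex.lt_def] at h
  refine ⟨by simpa using h.1, ?_⟩
  apply Complex.ext
  · simp
  · simp [← h.2]

open scoped MatrixOrder in
private lemma logdet_concave {n : ℕ} {X Y : Matrix (Fin n) (Fin n) ℂ}
    (hX : X.PosDef) (hY : Y.PosDef) {l : ℝ} (hl0 : 0 < l) (hl1 : l < 1) :
    Real.log ((l • X + (1 - l) • Y).det.re) ≥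
      l * Real.log X.det.re + (1 - l) * Real.log Y.det.re := by
  classical
  obtain ⟨hXre, hXdet⟩ := det_re_of_posDef hX
  obtain ⟨hYre, hYdet⟩ := det_re_of_posDef hY
  set S := CFC.sqrt X with hSdef
  have hS : S.IsHermitian := (CFC.sqrt_nonneg X).posSemidef.1
  have hSS : S * S = X := CFC.sqrt_mul_sqrt_self X hX.posSemidef.nonneg
  have hdetS : S.det * S.det = X.det := by rw [← det_mul, hSS]
  have hdetSne : S.det ≠ 0 := by
    intro h
    exact hX.det_pos.ne' (by rw [← hdetS, h, mul_zero])
  have hSu : IsUnit S.det := isUnit_iff_ne_zero.mpr hdetSne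
  have hSinv : S * S⁻¹ = 1 := Matrix.mul_nonsing_inv S hSu
  have hinvS : S⁻¹ * S = 1 := Matrix.nonsing_inv_mul S hSu
  have hSinvH : (S⁻¹).IsHermitian := hS.inv
  set Z := S⁻¹ * Y * S⁻¹ with hZdef
  have hZps : Z.PosSemidef := by
    have := hY.posSemidef.mul_mul_conjTranspose_same S⁻¹
    rwa [hSinvH.eq] at this
  have hZ : Z.PosDef := by
    refine Matrix.PosDef.of_dotProduct_mulVec_pos hZps.1 fun x hx => ?_
    have hx' : S⁻¹ *ᵥ x ≠ 0 := by
      intro h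
      apply hx
      have h2 : S *ᵥ (S⁻¹ *ᵥ x) = S *ᵥ 0 := by rw [h]
      simpa [mulVec_mulVec, hSinv] using h2
    have h2 := hY.dotProduct_mulVec_pos hx'
    have hr : star x ⬝ᵥ (Z *ᵥ x) = star (S⁻¹ *ᵥ x) ⬝ᵥ (Y *ᵥ (S⁻¹ *ᵥ x)) := by
      rw [hZdef, ← mulVec_mulVec, ← mulVec_mulVec, dotProduct_mulVec,
        star_mulVec, hSinvH.eq]
    rw [hr]
    exact h2
  set μ := hZ.1.eigenvalues with hμdef
  have hμpos : ∀ i, 0 < μ i := hZ.eigenvalues_pos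
  -- key affine identity
  have hSWS : ∀ W : Matrix (Fin n) (Fin n) ℂ, S * Z * S = Y := by
    intro _
    rw [hZdef]
    rw [show S * (S⁻¹ * Y * S⁻¹) * S = S * S⁻¹ * Y * (S⁻¹ * S) by
      simp only [mul_assoc]]
    rw [hSinv, hinvS, one_mul, mul_one]
  have key : l • X + (1 - l) • Y
      = S * ((l : ℂ) • 1 + ((1 - l : ℝ) : ℂ) • Z) * S := by
    rw [real_smul_mat, real_smul_mat]
    rw [mul_add, add_mul, mul_smul_comm, mul_smul_comm, smul_mul_assoc, smul_mul_assoc,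
      mul_one, hSS, hSWS 1]
  -- spectral decomposition of Z
  set U : Matrix (Fin n) (Fin n) ℂ := (hZ.1.eigenvectorUnitary : Matrix (Fin n) (Fin n) ℂ)
    with hUdef
  have hU : U * star U = 1 := (Matrix.mem_unitaryGroup_iff).mp hZ.1.eigenvectorUnitary.2
  have hspec : Z = U * (Matrix.diagonal fun i => ((μ i : ℝ) : ℂ)) * star U := by
    have := hZ.1.spectral_theorem
    exact this
  have hW : (l : ℂ) • (1 : Matrix (Fin n) (Fin n) ℂ) + ((1 - l : ℝ) : ℂ) • Z
      = U * (Matrix.diagonal fun i => ((l + (1 - l) * μ i : ℝ) : ℂ)) * star U := by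
    have hD : (Matrix.diagonal fun i => ((l + (1 - l) * μ i : ℝ) : ℂ))
        = (l : ℂ) • (1 : Matrix (Fin n) (Fin n) ℂ)
          + ((1 - l : ℝ) : ℂ) • Matrix.diagonal (fun i => ((μ i : ℝ) : ℂ)) := by
      ext i j
      rcases eq_or_ne i j with h | h
      · subst h
        simp only [Matrix.diagonal_apply_eq, Matrix.add_apply, Matrix.smul_apply,
          Matrix.one_apply_eq, smul_eq_mul, mul_one]
        push_cast
        ring
      · simp [Matrix.diagonal_apply_ne _ h, Matrix.one_apply_ne h]
    conv_lhs => rw [hspec, ← hU]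
    rw [hD, mul_add, add_mul, mul_smul_comm, smul_mul_assoc, mul_smul_comm, smul_mul_assoc,
      mul_one]
  -- determinants
  have hinvdet : S⁻¹.det * S.det = 1 := by rw [← Matrix.det_mul, hinvS, Matrix.det_one]
  have hdetW : ((l : ℂ) • (1 : Matrix (Fin n) (Fin n) ℂ) + ((1 - l : ℝ) : ℂ) • Z).det
      = ((∏ i, (l + (1 - l) * μ i) : ℝ) : ℂ) := by
    rw [hW, Matrix.det_mul_right_comm, Matrix.det_mul, hU, Matrix.det_one, one_mul,
      Matrix.det_diagonal]
    push_cast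
    rfl
  have hdetZ : Z.det = ((∏ i, μ i : ℝ) : ℂ) := by
    rw [hZ.1.det_eq_prod_eigenvalues]
    push_cast
    rfl
  have hYX : (∏ i, μ i) * X.det.re = Y.det.re := by
    have h1 : Z.det * X.det = Y.det := by
      calc Z.det * X.det = S⁻¹.det * Y.det * S⁻¹.det * (S.det * S.det) := by
            rw [hZdef, Matrix.det_mul, Matrix.det_mul, hdetS]
        _ = (S⁻¹.det * S.det) * (S⁻¹.det * S.det) * Y.det := by ring
        _ = Y.det := by rw [hinvdet, one_mul, one_mul]
    rw [hdetZ, hXdet, hYdet] at h1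
    exact_mod_cast h1
  have hdetMain : (l • X + (1 - l) • Y).det.re
      = X.det.re * ∏ i, (l + (1 - l) * μ i) := by
    have h2 : (l • X + (1 - l) • Y).det
        = ((X.det.re * ∏ i, (l + (1 - l) * μ i) : ℝ) : ℂ) := by
      rw [key, Matrix.det_mul, Matrix.det_mul, hdetW, mul_right_comm, ← Matrix.det_mul, hSS,
        hXdet]
      push_cast
      simp only [Complex.ofReal_re]
    rw [h2, Complex.ofReal_re]
  -- positivity
  have hP : ∀ i, 0 < l + (1 - l) * μ i := fun i =>
    add_pos hl0 (mul_pos (by linarith) (hμpos i))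
  have hProd : (0 : ℝ) < ∏ i, (l + (1 - l) * μ i) :=
    Finset.prod_pos fun i _ => hP i
  have hμProd : (0 : ℝ) < ∏ i, μ i := Finset.prod_pos fun i _ => hμpos i
  -- log inequality
  have hlog : ∀ i, (1 - l) * Real.log (μ i) ≤ Real.log (l + (1 - l) * μ i) := by
    intro i
    have h3 := strictConcaveOn_log_Ioi.concaveOn.2 (Set.mem_Ioi.mpr one_pos)
      (Set.mem_Ioi.mpr (hμpos i)) hl0.le (by linarith : (0:ℝ) ≤ 1 - l) (by ring)
    simpa using h3
  have hsum : (1 - l) * Real.log (∏ i, μ i)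
      ≤ ∑ i, Real.log (l + (1 - l) * μ i) := by
    rw [Real.log_prod fun i _ => (hμpos i).ne', Finset.mul_sum]
    exact Finset.sum_le_sum fun i _ => hlog i
  have hPμ : Real.log (∏ i, μ i) = Real.log Y.det.re - Real.log X.det.re := by
    have h4 : (∏ i, μ i) = Y.det.re / X.det.re := by
      rw [eq_div_iff hXre.ne']
      exact hYX
    rw [h4, Real.log_div hYre.ne' hXre.ne']
  rw [hdetMain, Real.log_mul hXre.ne' hProd.ne',
    Real.log_prod fun i _ => (hP i).ne']
  have h5 : (1 - l) * (Real.log Y.det.re - Real.log X.det.re)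
      ≤ ∑ i, Real.log (l + (1 - l) * μ i) := by
    rw [← hPμ]; exact hsum
  linarith

/-- Concavity of T ↦ log det(I + A T Aᴴ) on PSD matrices. -/
theorem stmt2 (N M : ℕ) (A : Matrix (Fin N) (Fin M) ℂ)
    (T₁ T₂ : Matrix (Fin M) (Fin M) ℂ)
    (h1 : T₁.PosSemidef) (h2 : T₂.PosSemidef)
    (l : ℝ) (hl : l ∈ Set.Icc (0:ℝ) 1) :
    Real.log ((1 + A * (l • T₁ + (1 - l) • T₂) * Aᴴ).det.re) ≥
      l * Real.log ((1 + A * T₁ * Aᴴ).det.re) +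
        (1 - l) * Real.log ((1 + A * T₂ * Aᴴ).det.re) := by
  obtain ⟨h0, h1'⟩ := hl
  have hX1 : (1 + A * T₁ * Aᴴ).PosDef :=
    Matrix.PosDef.add_posSemidef Matrix.PosDef.one (h1.mul_mul_conjTranspose_same A)
  have hX2 : (1 + A * T₂ * Aᴴ).PosDef :=
    Matrix.PosDef.add_posSemidef Matrix.PosDef.one (h2.mul_mul_conjTranspose_same A)
  rcases eq_or_lt_of_le h0 with h0' | h0'
  · simp [← h0']
  rcases eq_or_lt_of_le h1' with h1'' | h1''
  · simp [h1'']
  have haff : 1 + A * (l • T₁ + (1 - l) • T₂) * Aᴴ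
      = l • (1 + A * T₁ * Aᴴ) + (1 - l) • (1 + A * T₂ * Aᴴ) := by
    have h5 : A * (l • T₁ + (1 - l) • T₂) * Aᴴ
        = l • (A * T₁ * Aᴴ) + (1 - l) • (A * T₂ * Aᴴ) := by
      rw [Matrix.mul_add, Matrix.add_mul, Matrix.mul_smul, Matrix.smul_mul,
        Matrix.mul_smul, Matrix.smul_mul]
    rw [h5]
    module
  rw [haff]
  exact logdet_concave hX1 hX2 h0' (by linarith)
end

section
/- Let H ∈ ℂ^{N×M} with singular value decomposition giving H^H H = U Λ U^H where Λ = diag(λ₁²,…,λ_M²) and U is unitary. Then for any Hermitian PSD matrix T with tr(T) ≤ P, log det(I_N + (1/σ²) H T H^H) ≤ Σ_m log(1 + λ_m² p_m / σ²) where p_m = max(μ − σ²/λ_m², 0) and μ is chosen so that Σ_m p_m = P; equality holds for T = U diag(p₁,…,p_M) U^H. -/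
open Matrix ComplexOrder

/-!
Since `Hᴴ H = U Λ Uᴴ`, two applications of `det (1 + X Y) = det (1 + Y X)` turn the objective into
`log det (1 + σ⁻² Λ^{1/2} S Λ^{1/2})` with `S = Uᴴ T U` positive semidefinite. Hadamard's
inequality bounds this by `∑ log (1 + λ_m² q_m / σ²)`, where `q_m = S_mm ≥ 0` and
`∑ q_m = tr T ≤ P`. Each summand is concave in `q_m`, and its slope at the water-filling power
`p_m` is `1 / μ` when `p_m > 0` and at most `1 / μ` when `p_m = 0`; summing the tangent-line bounds
gives the inequality, the linear terms adding up to `(∑ q_m - P) / μ ≤ 0`. For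
`T = U diag(p) Uᴴ` the matrix `S` is diagonal and every step is an equality.
-/

namespace Matrix

variable {𝕜 n : Type*} [RCLike 𝕜] [Fintype n] [DecidableEq n]

theorem PosSemidef.re_det_le_one_of_diag_eq_one {A : Matrix n n 𝕜} (hA : A.PosSemidef)
    (hdiag : ∀ i, A i i = 1) : RCLike.re A.det ≤ 1 := by
  set ev := hA.isHermitian.eigenvalues
  have hsum : ∑ i, ev i = Fintype.card n := by
    have := hA.isHermitian.trace_eq_sum_eigenvalues
    simp only [trace, diag_apply, hdiag, Finset.sum_const, Finset.card_univ, nsmul_eq_mul,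
      mul_one] at this
    exact_mod_cast this.symm
  calc RCLike.re A.det = ∏ i, ev i := by
        rw [hA.isHermitian.det_eq_prod_eigenvalues, ← RCLike.ofReal_prod, RCLike.ofReal_re]
    _ ≤ ∏ i, Real.exp (ev i - 1) :=
        Finset.prod_le_prod (fun i _ => hA.eigenvalues_nonneg i)
          (fun i _ => by linarith [Real.add_one_le_exp (ev i - 1)])
    _ = 1 := by
        rw [← Real.exp_sum, Finset.sum_sub_distrib, hsum]
        simp

theorem PosDef.re_det_le_prod_re_diag {A : Matrix n n 𝕜} (hA : A.PosDef) :
    RCLike.re A.det ≤ ∏ i, RCLike.re (A i i) := by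
  set d : n → ℝ := fun i => RCLike.re (A i i)
  have hd : ∀ i, 0 < d i := fun i => (RCLike.pos_iff.mp hA.diag_pos).1
  set E : Matrix n n 𝕜 := diagonal fun i => ((√(d i))⁻¹ : ℝ) with hE_def
  have hE : Eᴴ = E := by simp [E, diagonal_conjTranspose]
  have hEAE : (E * A * E).PosSemidef := by
    simpa only [hE] using hA.posSemidef.mul_mul_conjTranspose_same E
  have hdiag : ∀ i, (E * A * E) i i = 1 := by
    intro i
    rw [mul_diagonal, diagonal_mul, ← hA.isHermitian.coe_re_apply_self i]
    have : (√(d i))⁻¹ * d i * (√(d i))⁻¹ = 1 := by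
      field_simp
      rw [Real.sq_sqrt (hd i).le, div_self (hd i).ne']
    exact_mod_cast this
  have hdet : RCLike.re (E * A * E).det = (∏ i, d i)⁻¹ * RCLike.re A.det := by
    have : (∏ i, (√(d i))⁻¹) * (∏ i, (√(d i))⁻¹) = (∏ i, d i)⁻¹ := by
      rw [← Finset.prod_mul_distrib, ← Finset.prod_inv_distrib]
      exact Finset.prod_congr rfl fun i _ => by rw [← mul_inv, Real.mul_self_sqrt (hd i).le]
    rw [det_mul, det_mul, mul_comm, ← mul_assoc, hE_def, det_diagonal, ← RCLike.ofReal_prod,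
      ← RCLike.ofReal_mul, this, RCLike.re_ofReal_mul]
  have hprod : 0 < ∏ i, d i := Finset.prod_pos fun i _ => hd i
  have := hEAE.re_det_le_one_of_diag_eq_one hdiag
  rwa [hdet, inv_mul_le_iff₀ hprod, mul_one] at this

theorem PosDef.log_re_det_le_sum_log_re_diag {A : Matrix n n 𝕜} (hA : A.PosDef) :
    Real.log (RCLike.re A.det) ≤ ∑ i, Real.log (RCLike.re (A i i)) := by
  rw [← Real.log_prod fun i _ => (RCLike.pos_iff.mp hA.diag_pos).1.ne']
  exact Real.log_le_log (RCLike.pos_iff.mp hA.det_pos).1 hA.re_det_le_prod_re_diag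

theorem det_one_add_smul_mul_comm {R α m : Type*} [CommRing α] [Fintype m] [DecidableEq m]
    [Monoid R] [DistribMulAction R α] [IsScalarTower R α α] [SMulCommClass R α α]
    (c : R) (X : Matrix m n α) (Y : Matrix n m α) :
    det (1 + c • (X * Y)) = det (1 + c • (Y * X)) := by
  rw [← Matrix.smul_mul, det_one_add_mul_comm, Matrix.mul_smul]

theorem det_one_add_smul_mul_mul_conjTranspose {m : Type*} [Fintype m] [DecidableEq m]
    (c : ℝ) {H : Matrix m n 𝕜} {U D : Matrix n n 𝕜} (hH : Hᴴ * H = U * D * Uᴴ)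
    (T : Matrix n n 𝕜) :
    det (1 + c • (H * T * Hᴴ)) = det (1 + c • (D * (Uᴴ * T * U))) := by
  calc det (1 + c • (H * T * Hᴴ))
      = det (1 + c • (T * Hᴴ * H)) := by
        rw [Matrix.mul_assoc, det_one_add_smul_mul_comm]
    _ = det (1 + c • (T * U * D * Uᴴ)) := by
        rw [Matrix.mul_assoc T, hH]; simp only [Matrix.mul_assoc]
    _ = det (1 + c • (Uᴴ * T * U * D)) := by
        rw [det_one_add_smul_mul_comm]; simp only [Matrix.mul_assoc]
    _ = det (1 + c • (D * (Uᴴ * T * U))) := det_one_add_smul_mul_comm c _ D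

theorem log_re_det_one_add_smul_diagonal_mul_le {c : ℝ} (hc : 0 ≤ c) {d : n → ℝ}
    (hd : ∀ i, 0 ≤ d i) {S : Matrix n n 𝕜} (hS : S.PosSemidef) :
    Real.log (RCLike.re (det (1 + c • (diagonal (fun i => (d i : 𝕜)) * S)))) ≤
      ∑ i, Real.log (1 + c * d i * RCLike.re (S i i)) := by
  set R : Matrix n n 𝕜 := diagonal fun i => ((√(d i) : ℝ) : 𝕜) with hR_def
  have hRR : diagonal (fun i => (d i : 𝕜)) = R * R := by
    rw [hR_def, diagonal_mul_diagonal]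
    congr with i
    rw [← RCLike.ofReal_mul, Real.mul_self_sqrt (hd i)]
  have hR : Rᴴ = R := by simp [hR_def, diagonal_conjTranspose]
  have hW : (1 + c • (R * S * R)).PosDef :=
    PosDef.one.add_posSemidef ((hR ▸ hS.mul_mul_conjTranspose_same R).smul hc)
  have hWdiag : ∀ i, RCLike.re ((1 + c • (R * S * R)) i i) = 1 + c * d i * RCLike.re (S i i) := by
    intro i
    simp only [add_apply, one_apply_eq, smul_apply, hR_def, mul_diagonal, diagonal_mul]
    rw [mul_comm, ← mul_assoc, ← RCLike.ofReal_mul, Real.mul_self_sqrt (hd i)]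
    simp [RCLike.smul_re, mul_assoc]
  rw [hRR, Matrix.mul_assoc, det_one_add_smul_mul_comm]
  simpa only [hWdiag] using hW.log_re_det_le_sum_log_re_diag

theorem log_re_det_one_add_smul_diagonal_mul_diagonal {c : ℝ} (hc : 0 ≤ c) {a b : n → ℝ}
    (ha : ∀ i, 0 ≤ a i) (hb : ∀ i, 0 ≤ b i) :
    Real.log (RCLike.re (det (1 + c • (diagonal (fun i => (a i : 𝕜)) *
      diagonal (fun i => (b i : 𝕜)))))) = ∑ i, Real.log (1 + c * a i * b i) := by
  rw [diagonal_mul_diagonal, ← diagonal_smul, ← diagonal_one, diagonal_add, det_diagonal]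
  have : ∀ i, 0 < 1 + c * a i * b i := fun i => by have := ha i; have := hb i; positivity
  rw [← Real.log_prod fun i _ => (this i).ne', ← RCLike.ofReal_re (K := 𝕜) (∏ i, _),
    RCLike.ofReal_prod]
  simp [RCLike.real_smul_eq_coe_mul, mul_assoc]

end Matrix

theorem Real.log_le_log_add_sub_div {x y : ℝ} (hx : 0 < x) (hy : 0 < y) :
    Real.log x ≤ Real.log y + (x - y) / y := by
  have := Real.log_le_sub_one_of_pos (div_pos hx hy)
  rw [Real.log_div hx.ne' hy.ne'] at this
  rw [sub_div, div_self hy.ne']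
  linarith

noncomputable def waterFill (σ2 μ a : ℝ) : ℝ := if a = 0 then 0 else max (μ - σ2 / a) 0

section WaterFilling

variable {σ2 μ a : ℝ}

theorem waterFill_nonneg : 0 ≤ waterFill σ2 μ a := by
  unfold waterFill
  split_ifs
  exacts [le_rfl, le_max_right _ _]

theorem waterFill_eq_zero_of_nonpos (hσ : 0 ≤ σ2) (ha : 0 ≤ a) (hμ : μ ≤ 0) :
    waterFill σ2 μ a = 0 := by
  unfold waterFill
  split_ifs
  · rfl
  · exact max_eq_right (by linarith [div_nonneg hσ ha])

/-- KKT condition of water-filling: the marginal gain `a / (σ2 + a w)` at the water-filling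
power `w` is `1 / μ` where `w > 0`, and at most `1 / μ` where `w = 0`. -/
theorem mul_sub_waterFill_div_le (hσ : 0 < σ2) (hμ : 0 < μ) (ha : 0 ≤ a) {q : ℝ} (hq : 0 ≤ q) :
    a * (q - waterFill σ2 μ a) / (σ2 + a * waterFill σ2 μ a) ≤ (q - waterFill σ2 μ a) / μ := by
  unfold waterFill
  rcases ha.eq_or_lt with rfl | ha
  · simp only [if_true, zero_mul, zero_div, sub_zero]
    positivity
  rw [if_neg ha.ne']
  rcases le_total (μ - σ2 / a) 0 with hw | hw
  · rw [max_eq_right hw, mul_zero, add_zero, sub_zero, div_le_div_iff₀ hσ hμ]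
    have : μ * a ≤ σ2 := by rwa [sub_nonpos, le_div_iff₀ ha] at hw
    nlinarith
  · rw [max_eq_left hw]
    have : σ2 + a * (μ - σ2 / a) = a * μ := by field_simp; ring
    rw [this, mul_div_mul_left _ _ ha.ne']

theorem log_one_add_mul_div_le_waterFill (hσ : 0 < σ2) (hμ : 0 < μ) (ha : 0 ≤ a) {q : ℝ}
    (hq : 0 ≤ q) :
    Real.log (1 + a * q / σ2) ≤
      Real.log (1 + a * waterFill σ2 μ a / σ2) + (q - waterFill σ2 μ a) / μ := by
  have hw := waterFill_nonneg (σ2 := σ2) (μ := μ) (a := a)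
  have htangent := Real.log_le_log_add_sub_div (x := 1 + a * q / σ2)
    (y := 1 + a * waterFill σ2 μ a / σ2) (by positivity) (by positivity)
  have hslope : (1 + a * q / σ2 - (1 + a * waterFill σ2 μ a / σ2)) /
      (1 + a * waterFill σ2 μ a / σ2) =
      a * (q - waterFill σ2 μ a) / (σ2 + a * waterFill σ2 μ a) := by
    field_simp
    ring
  linarith [mul_sub_waterFill_div_le hσ hμ ha hq]

theorem pos_of_sum_waterFill_pos {ι : Type*} [Fintype ι] (hσ : 0 ≤ σ2) {a : ι → ℝ}
    (ha : ∀ i, 0 ≤ a i) (hsum : 0 < ∑ i, waterFill σ2 μ (a i)) : 0 < μ := by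
  by_contra! hμ
  simp [waterFill_eq_zero_of_nonpos hσ (ha _) hμ] at hsum

theorem sum_log_one_add_le_waterFill {ι : Type*} [Fintype ι] (hσ : 0 < σ2) (hμ : 0 < μ)
    {a q : ι → ℝ} (ha : ∀ i, 0 ≤ a i) (hq : ∀ i, 0 ≤ q i)
    (hsum : ∑ i, q i ≤ ∑ i, waterFill σ2 μ (a i)) :
    ∑ i, Real.log (1 + a i * q i / σ2) ≤
      ∑ i, Real.log (1 + a i * waterFill σ2 μ (a i) / σ2) := by
  have hslack : (∑ i, q i - ∑ i, waterFill σ2 μ (a i)) / μ ≤ 0 :=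
    div_nonpos_of_nonpos_of_nonneg (by linarith) hμ.le
  calc ∑ i, Real.log (1 + a i * q i / σ2)
      ≤ ∑ i, (Real.log (1 + a i * waterFill σ2 μ (a i) / σ2) +
          (q i - waterFill σ2 μ (a i)) / μ) :=
        Finset.sum_le_sum fun i _ => log_one_add_mul_div_le_waterFill hσ hμ (ha i) (hq i)
    _ = ∑ i, Real.log (1 + a i * waterFill σ2 μ (a i) / σ2) +
          (∑ i, q i - ∑ i, waterFill σ2 μ (a i)) / μ := by
        rw [Finset.sum_add_distrib, ← Finset.sum_div, Finset.sum_sub_distrib]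
    _ ≤ _ := by linarith

end WaterFilling

/-- Here `lam m` stands for λ_m². -/
theorem stmt3 (N M : ℕ) (σ2 P μ : ℝ) (hσ : 0 < σ2) (hP : 0 < P)
    (H : Matrix (Fin N) (Fin M) ℂ) (U : Matrix (Fin M) (Fin M) ℂ)
    (hU : U ∈ Matrix.unitaryGroup (Fin M) ℂ)
    (lam : Fin M → ℝ) (hlam : ∀ m, 0 ≤ lam m)
    (hH : Hᴴ * H = U * Matrix.diagonal (fun m => ((lam m : ℝ) : ℂ)) * Uᴴ)
    (p : Fin M → ℝ)
    (hp : ∀ m, p m = if lam m = 0 then 0 else max (μ - σ2 / lam m) 0)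
    (hμ : ∑ m, p m = P) :
    (∀ T : Matrix (Fin M) (Fin M) ℂ, T.PosSemidef → T.trace.re ≤ P →
      Real.log ((1 + (σ2⁻¹ : ℝ) • (H * T * Hᴴ)).det.re) ≤
        ∑ m, Real.log (1 + lam m * p m / σ2)) ∧
    Real.log ((1 + (σ2⁻¹ : ℝ) •
        (H * (U * Matrix.diagonal (fun m => ((p m : ℝ) : ℂ)) * Uᴴ) * Hᴴ)).det.re) =
      ∑ m, Real.log (1 + lam m * p m / σ2) := by
  obtain rfl : p = fun m => waterFill σ2 μ (lam m) := funext hp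
  have hμpos : 0 < μ := pos_of_sum_waterFill_pos hσ.le hlam (hμ ▸ hP)
  have hUU : Uᴴ * U = 1 := mem_unitaryGroup_iff'.mp hU
  have hUU' : U * Uᴴ = 1 := mem_unitaryGroup_iff.mp hU
  have hdiv : ∀ m q, 1 + σ2⁻¹ * lam m * q = 1 + lam m * q / σ2 := fun m q => by ring
  refine ⟨fun T hT htr => ?_, ?_⟩
  · have hS : (Uᴴ * T * U).PosSemidef := hT.conjTranspose_mul_mul_same U
    have htrS : (Uᴴ * T * U).trace = T.trace := by
      rw [trace_mul_comm, ← Matrix.mul_assoc, hUU', Matrix.one_mul]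
    rw [det_one_add_smul_mul_mul_conjTranspose _ hH]
    refine (log_re_det_one_add_smul_diagonal_mul_le (by positivity) hlam hS).trans ?_
    simp only [hdiv]
    refine sum_log_one_add_le_waterFill hσ hμpos hlam
      (fun m => (RCLike.nonneg_iff.mp hS.diag_nonneg).1) ?_
    calc ∑ m, ((Uᴴ * T * U) m m).re = (Uᴴ * T * U).trace.re := by simp [trace]
      _ ≤ P := htrS ▸ htr
      _ = _ := hμ.symm
  · have hconj : ∀ X, Uᴴ * (U * X * Uᴴ) * U = X := fun X => by
      rw [← Matrix.mul_assoc, ← Matrix.mul_assoc, hUU, Matrix.one_mul, Matrix.mul_assoc, hUU,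
        Matrix.mul_one]
    rw [det_one_add_smul_mul_mul_conjTranspose _ hH, hconj]
    refine (log_re_det_one_add_smul_diagonal_mul_diagonal (𝕜 := ℂ) (by positivity) hlam
      fun m => waterFill_nonneg).trans ?_
    simp only [hdiv]
end
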